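/- arXiv:1412.5084 — 9 statements merged into one kernel-verified Lean document; each statement's English description precedes it below -/
import Mathlib

section
/- Let p be a prime and n ≥ 2 an integer that is not a power of p. Write n in base p as n = n_0 + n_1 p + ... + n_k p^k with n_k > 0, and set i = n - p^k. Then 0 < i < n and C(n, i) is not divisible by p. -/
/-! By Lucas' theorem, `C(n, p ^ k) ≡ ⌊n / p ^ k⌋ (mod p)`, and for `p ^ k ≤ n < p ^ (k + 1)` this
leading base-`p` digit of `n` lies in `[1, p)`. Since `C(n, n - p ^ k) = C(n, p ^ k)`, the choice
`i = n - p ^ k` works as soon as `n ≠ p ^ k`. -/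

open Finset in
theorem Choose.choose_prime_pow_modEq_div {p : ℕ} [Fact p.Prime] (n k : ℕ) :
    n.choose (p ^ k) ≡ n / p ^ k [MOD p] := by
  have hp : 0 < p := (Fact.out : p.Prime).pos
  have hdigits : ∀ i ∈ range k, (n / p ^ i % p).choose (p ^ k / p ^ i % p) = 1 := by
    intro i hi
    have hik := mem_range.mp hi
    rw [Nat.pow_div hik.le hp, Nat.mod_eq_zero_of_dvd (dvd_pow_self p (by omega)),
      Nat.choose_zero_right]
  have h := Choose.choose_modEq_choose_mul_prod_range_choose (n := n) (k := p ^ k) (p := p) k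
  rw [prod_congr rfl hdigits, prod_const_one, Nat.cast_one, mul_one,
    Nat.div_self (pow_pos hp k), Nat.choose_one_right] at h
  exact Int.natCast_modEq_iff.mp h

theorem Nat.Prime.not_dvd_choose_prime_pow {p n k : ℕ} (hp : p.Prime) (hk1 : p ^ k ≤ n)
    (hk2 : n < p ^ (k + 1)) : ¬ p ∣ n.choose (p ^ k) := by
  have : Fact p.Prime := ⟨hp⟩
  have hpos : 0 < n / p ^ k := Nat.div_pos hk1 (pow_pos hp.pos k)
  have hlt : n / p ^ k < p := Nat.div_lt_of_lt_mul (by rwa [← pow_succ])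
  rw [(Choose.choose_prime_pow_modEq_div n k).dvd_iff dvd_rfl]
  exact Nat.not_dvd_of_pos_of_lt hpos hlt

theorem choose_not_dvd_of_not_pow_general (p n k : ℕ) (hp : p.Prime)
    (hnp : ¬ ∃ s : ℕ, n = p ^ s) (hk1 : p ^ k ≤ n) (hk2 : n < p ^ (k + 1)) :
    0 < n - p ^ k ∧ n - p ^ k < n ∧ ¬ p ∣ n.choose (n - p ^ k) := by
  have hlt : p ^ k < n := hk1.lt_of_ne fun h => hnp ⟨k, h.symm⟩
  refine ⟨Nat.sub_pos_of_lt hlt, Nat.sub_lt (by omega) (pow_pos hp.pos k), ?_⟩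
  rw [Nat.choose_symm hk1]
  exact hp.not_dvd_choose_prime_pow hk1 hk2

theorem choose_not_dvd_of_not_pow (p n k : ℕ) (hp : p.Prime) (hn : 2 ≤ n)
    (hnp : ¬ ∃ s : ℕ, n = p ^ s) (hk1 : p ^ k ≤ n) (hk2 : n < p ^ (k + 1)) :
    0 < n - p ^ k ∧ n - p ^ k < n ∧ ¬ p ∣ n.choose (n - p ^ k) :=
  choose_not_dvd_of_not_pow_general p n k hp hnp hk1 hk2
end

section
/- For any integer k > 1, the greatest common divisor of the numbers C(2k+1, 2i) − C(2k+1, 2i−1), taken over 0 < i ≤ k, equals m_{2k+1} · m_{2k}, where m_j = p if j + 1 = p^s for some prime p and integer s > 0, and m_j = 1 otherwise. -/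
/-!
By Pascal's rule `C(2k+1, 2i) - C(2k+1, 2i-1) = c i - c (i-1)` with `c i = C(2k, 2i) - 1` and
`c 0 = 0`, so the gcd is that of the `c i`, and `M` divides it iff `C(2k, j) ≡ 1 (mod M)` for every
even `j`.

The key step: if `n + 1 = t m`, `M ∣ n + 1`, `M` is prime to `t + 1` and `C(n, t ± 1) ≡ 1 (mod M)`,
then `M ∣ m`, by Pascal's rule and `(n + 1) C(n, j) = (j + 1) C(n + 1, j + 1)` at `j = t - 1, t`.
For an odd prime `p` dividing the gcd, comparing `C(2k, 2)` with `C(2k, 4)` gives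
`p ∣ 8 (2k + 1)`, and the key step with `t` the exact power of `p` dividing `2k + 1` forces
`2k + 1 = p ^ r`; `p ^ 2` does not divide the gcd, by the key step with `t = p ^ (r - 1)` and
`M = p ^ 2` if `r ≥ 2`, and since the comparison would give `p ^ 2 ∣ 8 p` if `r = 1`. For `p = 2`, Lucas' theorem reduces the condition to `C(k, i)` being odd for all `i`, which by
the same step gives `k + 1 = 2 ^ s`, and then `C(2k, 2) ≡ 3 (mod 4)`. Conversely
`C(p ^ s - 1, j) ≡ (-1) ^ j (mod p)`. Hence the gcd is squarefree, with the prime factors of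
`mCoef (2k + 1) * mCoef (2k)`.
-/

open Classical in
/-- `mCoef j = p` if `j + 1 = p ^ s` for a prime `p` and `s > 0`, and `1` otherwise. -/
noncomputable def mCoef (j : ℕ) : ℕ :=
  if h : ∃ p : ℕ, ∃ s : ℕ, p.Prime ∧ 0 < s ∧ j + 1 = p ^ s then h.choose else 1

open Finset

theorem Nat.choose_succ_sub_choose_succ (n j : ℕ) :
    ((n + 1).choose (j + 2) : ℤ) - (n + 1).choose (j + 1) = n.choose (j + 2) - n.choose j := by
  rw [Nat.choose_succ_succ', Nat.choose_succ_succ' n j]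
  push_cast
  ring

theorem Finset.gcd_Icc_sub_pred {α : Type*} [CommRing α] [IsDomain α] [NormalizedGCDMonoid α]
    (f : ℕ → α) (hf : f 0 = 0) (k : ℕ) :
    (Icc 1 k).gcd (fun i => f i - f (i - 1)) = (Icc 1 k).gcd f := by
  have hmem : ∀ {i}, i ≠ 0 → i ≤ k → i ∈ Icc 1 k := fun h0 hk => mem_Icc.mpr ⟨by omega, hk⟩
  have hdvd_f : ∀ i ≤ k, (Icc 1 k).gcd (fun i => f i - f (i - 1)) ∣ f i := by
    intro i
    induction i with
    | zero => simp [hf]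
    | succ i ih =>
      intro hi
      simpa using dvd_add (gcd_dvd (hmem i.succ_ne_zero hi)) (ih (by omega))
  refine dvd_antisymm_of_normalize_eq normalize_gcd normalize_gcd
    (dvd_gcd fun i hi => hdvd_f i (mem_Icc.mp hi).2) (dvd_gcd fun i hi => dvd_sub (gcd_dvd hi) ?_)
  obtain h0 | h0 := eq_or_ne (i - 1) 0
  · simp [h0, hf]
  · exact gcd_dvd (hmem h0 (by have := (mem_Icc.mp hi).2; omega))

theorem mCoef_eq_of_succ_eq_pow {j p s : ℕ} (hp : p.Prime) (hs : 0 < s) (h : j + 1 = p ^ s) :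
    mCoef j = p := by
  have hex : ∃ p s : ℕ, p.Prime ∧ 0 < s ∧ j + 1 = p ^ s := ⟨p, s, hp, hs, h⟩
  obtain ⟨s', hp', hs', h'⟩ := hex.choose_spec
  rw [mCoef, dif_pos hex]
  refine (Nat.prime_dvd_prime_iff_eq hp' hp).mp (hp'.dvd_of_dvd_pow (n := s) ?_)
  exact (dvd_pow_self _ hs'.ne').trans (h'.symm.trans h).dvd

theorem mCoef_eq_one_or_exists (j : ℕ) :
    mCoef j = 1 ∨ ∃ p s : ℕ, p.Prime ∧ 0 < s ∧ j + 1 = p ^ s ∧ mCoef j = p := by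
  by_cases hex : ∃ p s : ℕ, p.Prime ∧ 0 < s ∧ j + 1 = p ^ s
  · obtain ⟨p, s, hp, hs, h⟩ := hex
    exact .inr ⟨p, s, hp, hs, h, mCoef_eq_of_succ_eq_pow hp hs h⟩
  · exact .inl (by rw [mCoef, dif_neg hex])

theorem mCoef_dvd_succ (j : ℕ) : mCoef j ∣ j + 1 := by
  obtain h | ⟨p, s, -, hs, hps, h⟩ := mCoef_eq_one_or_exists j
  · rw [h]
    exact one_dvd _
  · rw [h, hps]
    exact dvd_pow_self p hs.ne'

theorem Nat.coprime_pow_add_one {p a : ℕ} (ha : 0 < a) : p.Coprime (p ^ a + 1) := by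
  obtain ⟨b, rfl⟩ := Nat.exists_eq_add_of_lt ha
  rw [zero_add, pow_succ, add_comm, Nat.coprime_add_mul_right_right]
  exact Nat.coprime_one_right p

theorem Nat.choose_two_mul_modEq_two (n i : ℕ) : (2 * n).choose (2 * i) ≡ n.choose i [MOD 2] := by
  have := Fact.mk Nat.prime_two
  simpa using Choose.choose_modEq_choose_mod_mul_choose_div_nat (n := 2 * n) (k := 2 * i) (p := 2)

theorem Nat.choose_two_modEq_three_of_eight_dvd {n : ℕ} (h : 8 ∣ n + 2) :
    n.choose 2 ≡ 3 [MOD 4] := by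
  obtain ⟨v, rfl⟩ : ∃ v, n = 8 * v + 6 := by obtain ⟨u, hu⟩ := h; exact ⟨u - 1, by omega⟩
  have hdesc : (8 * v + 6) * (8 * v + 5) = 2 * (8 * v + 6).choose 2 := by
    simpa [Nat.descFactorial, mul_comm] using
      Nat.descFactorial_eq_factorial_mul_choose (8 * v + 6) 2
  have hw : 2 * (8 * v + 6).choose 2 = 8 * (8 * v ^ 2 + 11 * v + 3) + 6 := by rw [← hdesc]; ring
  unfold Nat.ModEq
  omega

theorem choose_eq_neg_one_pow_of_succ_eq_prime_pow {p n s : ℕ} (hp : p.Prime)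
    (hn : n + 1 = p ^ s) : ∀ j ≤ n, (n.choose j : ZMod p) = (-1) ^ j
  | 0, _ => by simp
  | j + 1, hj => by
    have hdvd : ((n + 1).choose (j + 1) : ZMod p) = 0 := by
      rw [ZMod.natCast_eq_zero_iff, hn]
      exact hp.dvd_choose_pow j.succ_ne_zero (by omega)
    rw [Nat.choose_succ_succ', Nat.cast_add,
      choose_eq_neg_one_pow_of_succ_eq_prime_pow hp hn j (by omega)] at hdvd
    linear_combination hdvd

theorem eight_mul_add_one_eq_zero {R : Type*} [CommRing R] {n : ℕ} (hn : 4 ≤ n)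
    (h2 : (n.choose 2 : R) = 1) (h4 : (n.choose 4 : R) = 1) : 8 * ((n : R) + 1) = 0 := by
  obtain ⟨m, rfl⟩ := Nat.exists_eq_add_of_le' hn
  have e2 : (m + 4) * (m + 3) = 2 * (m + 4).choose 2 := by
    simpa [Nat.descFactorial, mul_comm] using Nat.descFactorial_eq_factorial_mul_choose (m + 4) 2
  have e4 : (m + 4) * (m + 3) * (m + 2) * (m + 1) = 24 * (m + 4).choose 4 := by
    simpa [Nat.descFactorial, Nat.factorial, mul_comm, mul_assoc, mul_left_comm] using
      Nat.descFactorial_eq_factorial_mul_choose (m + 4) 4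
  have c2 := congrArg (Nat.cast : ℕ → R) e2
  have c4 := congrArg (Nat.cast : ℕ → R) e4
  push_cast [h2, h4] at c2 c4 ⊢
  linear_combination (-1 : R) * c4 + (((m : R) + 2) * (m + 1) + 2) * c2

theorem dvd_of_choose_pred_eq_one_of_choose_succ_eq_one {M n t m : ℕ}
    (htm : t * m = n + 1) (hM : M ∣ n + 1) (hcop : M.Coprime (t + 1))
    (hpred : (n.choose (t - 1) : ZMod M) = 1) (hsucc : (n.choose (t + 1) : ZMod M) = 1) : M ∣ m := by
  obtain ⟨u, rfl⟩ : ∃ u, t = u + 1 := Nat.exists_eq_succ_of_ne_zero (by rintro rfl; omega)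
  rw [Nat.add_sub_cancel] at hpred
  have hN : ((n + 1 : ℕ) : ZMod M) = 0 := (ZMod.natCast_eq_zero_iff _ _).mpr hM
  have hunit : IsUnit ((u + 1 + 1 : ℕ) : ZMod M) := (ZMod.isUnit_iff_coprime _ _).mpr hcop.symm
  have hchoose : ((n + 1).choose (u + 1 + 1) : ZMod M) = 0 := by
    have h := congrArg (Nat.cast : ℕ → ZMod M) (Nat.add_one_mul_choose_eq n (u + 1))
    rw [Nat.cast_mul, Nat.cast_mul, hN, zero_mul] at h
    exact hunit.mul_left_eq_zero.mp h.symm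
  have hmid : (n.choose (u + 1) : ZMod M) = -1 := by
    have h := congrArg (Nat.cast : ℕ → ZMod M) (Nat.choose_succ_succ' n (u + 1))
    rw [hchoose, Nat.cast_add, hsucc] at h
    linear_combination -h
  have hm : m * n.choose u = n.choose u + n.choose (u + 1) := by
    rw [← Nat.choose_succ_succ']
    apply Nat.eq_of_mul_eq_mul_left u.succ_pos
    calc (u + 1) * (m * n.choose u) = (n + 1) * n.choose u := by rw [← htm, mul_assoc]
      _ = (u + 1) * (n + 1).choose (u + 1) := by rw [Nat.add_one_mul_choose_eq, mul_comm]
  rw [← ZMod.natCast_eq_zero_iff]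
  simpa [hpred, hmid] using congrArg (Nat.cast : ℕ → ZMod M) hm

theorem exists_succ_eq_pow_of_choose_eq_one {p n : ℕ} (hp : p.Prime) (hdvd : p ∣ n + 1)
    (h : ∀ a, 0 < a → p ^ a + 1 ≤ n →
      (n.choose (p ^ a - 1) : ZMod p) = 1 ∧ (n.choose (p ^ a + 1) : ZMod p) = 1) :
    ∃ r, n + 1 = p ^ r := by
  set a := (n + 1).factorization p
  set m := (n + 1) / p ^ a
  have hsplit : p ^ a * m = n + 1 := Nat.ordProj_mul_ordCompl_eq_self (n + 1) p
  have ha : 0 < a := hp.factorization_pos_of_dvd n.succ_ne_zero hdvd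
  refine ⟨a, by_contra fun hne => Nat.not_dvd_ordCompl hp n.succ_ne_zero ?_⟩
  have hm0 : m ≠ 0 := by
    rintro hm
    rw [hm, mul_zero] at hsplit
    omega
  have hm1 : m ≠ 1 := fun hm => hne (by rw [← hsplit, hm, mul_one])
  have hm : 2 ≤ m := (Nat.two_le_iff m).mpr ⟨hm0, hm1⟩
  have hpa : p ≤ p ^ a := Nat.le_self_pow ha.ne' p
  have hle : p ^ a * 2 ≤ p ^ a * m := Nat.mul_le_mul_left _ hm
  obtain ⟨hpred, hsucc⟩ := h a ha (by linarith [hp.two_le])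
  exact dvd_of_choose_pred_eq_one_of_choose_succ_eq_one hsplit hdvd (Nat.coprime_pow_add_one ha)
    hpred hsucc

def EvenChooseEqOneMod (M n : ℕ) : Prop :=
  ∀ j ≤ n, Even j → (n.choose j : ZMod M) = 1

namespace EvenChooseEqOneMod

theorem of_dvd {M d n : ℕ} (h : EvenChooseEqOneMod M n) (hd : d ∣ M) : EvenChooseEqOneMod d n :=
  fun j hj he => by
    simpa only [map_natCast, map_one] using congrArg (ZMod.castHom hd (ZMod d)) (h j hj he)

theorem mul {M N n : ℕ} (hM : EvenChooseEqOneMod M n) (hN : EvenChooseEqOneMod N n)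
    (hMN : M.Coprime N) : EvenChooseEqOneMod (M * N) n := by
  intro j hj he
  have hmod : ∀ {K}, EvenChooseEqOneMod K n → n.choose j ≡ 1 [MOD K] := fun hK =>
    (ZMod.natCast_eq_natCast_iff _ _ _).mp (by simpa using hK j hj he)
  simpa using (ZMod.natCast_eq_natCast_iff _ _ _).mpr
    ((Nat.modEq_and_modEq_iff_modEq_mul hMN).mp ⟨hmod hM, hmod hN⟩)

theorem one (n : ℕ) : EvenChooseEqOneMod 1 n :=
  fun _ _ _ => Subsingleton.elim _ _

theorem of_succ_eq_prime_pow {p n s : ℕ} (hp : p.Prime) (hn : n + 1 = p ^ s) :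
    EvenChooseEqOneMod p n :=
  fun j hj he => by rw [choose_eq_neg_one_pow_of_succ_eq_prime_pow hp hn j hj, he.neg_one_pow]

theorem two_mul_of_succ_eq_two_pow {k s : ℕ} (hk : k + 1 = 2 ^ s) :
    EvenChooseEqOneMod 2 (2 * k) := by
  rintro j hj ⟨i, rfl⟩
  rw [← two_mul, (ZMod.natCast_eq_natCast_iff _ _ _).mpr (Nat.choose_two_mul_modEq_two k i),
    choose_eq_neg_one_pow_of_succ_eq_prime_pow Nat.prime_two hk i (by omega),
    show (-1 : ZMod 2) = 1 from rfl, one_pow]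

theorem exists_succ_eq_pow {p n : ℕ} (h : EvenChooseEqOneMod p n) (hp : p.Prime) (hp2 : p ≠ 2)
    (hn : 4 ≤ n) : ∃ r, n + 1 = p ^ r := by
  have hodd : Odd p := hp.odd_of_ne_two hp2
  refine exists_succ_eq_pow_of_choose_eq_one hp ?_ fun a _ ha =>
    ⟨h _ (by omega) (Nat.Odd.sub_odd hodd.pow odd_one), h _ ha (hodd.pow.add_one)⟩
  have h8 : p ∣ 2 ^ 3 * (n + 1) := by
    rw [← ZMod.natCast_eq_zero_iff]
    exact_mod_cast eight_mul_add_one_eq_zero hn (h 2 (by omega) even_two) (h 4 hn (by decide))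
  have hcop : p.Coprime (2 ^ 3) := ((Nat.coprime_primes hp Nat.prime_two).mpr hp2).pow_right 3
  exact hcop.dvd_of_dvd_mul_left h8

theorem exists_two_mul_add_two_eq_two_pow {k : ℕ} (h : EvenChooseEqOneMod 2 (2 * k)) :
    ∃ s, 2 * k + 2 = 2 ^ s := by
  have hodd : ∀ i ≤ k, (k.choose i : ZMod 2) = 1 := fun i hi => by
    rw [← (ZMod.natCast_eq_natCast_iff _ _ _).mpr (Nat.choose_two_mul_modEq_two k i)]
    exact h _ (by omega) (even_two_mul i)
  obtain rfl | hk := Nat.eq_zero_or_pos k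
  · exact ⟨1, rfl⟩
  obtain ⟨t, ht⟩ : ∃ t, k + 1 = 2 ^ t := by
    refine exists_succ_eq_pow_of_choose_eq_one Nat.prime_two ?_ fun a _ ha =>
      ⟨hodd _ (by omega), hodd _ ha⟩
    have hk1 := hodd 1 hk
    rw [Nat.choose_one_right] at hk1
    rw [← ZMod.natCast_eq_zero_iff, Nat.cast_succ, hk1]
    rfl
  exact ⟨t + 1, by rw [pow_succ]; omega⟩

theorem not_prime_sq {p n : ℕ} (hp : p.Prime) (hp2 : p ≠ 2) (hn : 4 ≤ n) :
    ¬EvenChooseEqOneMod (p ^ 2) n := by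
  intro h
  have hodd : Odd p := hp.odd_of_ne_two hp2
  have hp3 : 3 ≤ p := by have := hp.two_le; omega
  obtain ⟨r, hr⟩ := (h.of_dvd (dvd_pow_self p two_ne_zero)).exists_succ_eq_pow hp hp2 hn
  obtain _ | _ | r := r
  · simp at hr
    omega
  · have h8 : p ^ 2 ∣ 2 ^ 3 * (n + 1) := by
      rw [← ZMod.natCast_eq_zero_iff]
      exact_mod_cast eight_mul_add_one_eq_zero hn (h 2 (by omega) even_two) (h 4 hn (by decide))
    rw [hr, pow_one, sq] at h8
    have h2 := hp.dvd_of_dvd_pow (Nat.dvd_of_mul_dvd_mul_right hp.pos h8)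
    exact hp2 ((Nat.prime_dvd_prime_iff_eq hp Nat.prime_two).mp h2)
  · have hpr : p ^ (r + 1) * 3 ≤ p ^ (r + 1) * p := Nat.mul_le_mul_left _ hp3
    rw [← pow_succ] at hpr
    have hpr1 : 1 ≤ p ^ (r + 1) := Nat.one_le_pow _ _ hp.pos
    have htm : p ^ (r + 1) * p = n + 1 := by rw [hr, ← pow_succ]
    have hM : p ^ 2 ∣ n + 1 := hr ▸ pow_dvd_pow p (by omega)
    have hcop := Nat.Coprime.pow_left 2 (Nat.coprime_pow_add_one (p := p) r.succ_pos)
    have hsq : p ^ 2 ∣ p := dvd_of_choose_pred_eq_one_of_choose_succ_eq_one htm hM hcop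
      (h _ (by omega) (Nat.Odd.sub_odd hodd.pow odd_one)) (h _ (by omega) hodd.pow.add_one)
    exact absurd (Nat.le_of_dvd hp.pos hsq) (by nlinarith)

theorem not_four {k : ℕ} (hk : 2 ≤ k) : ¬EvenChooseEqOneMod 4 (2 * k) := by
  intro h
  obtain ⟨s, hs⟩ := (h.of_dvd (by norm_num : 2 ∣ 4)).exists_two_mul_add_two_eq_two_pow
  have hs3 : 3 ≤ s := by
    by_contra! hs3
    interval_cases s <;> omega
  have h8 : 8 ∣ 2 * k + 2 := hs ▸ pow_dvd_pow 2 hs3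
  have h1 := (ZMod.natCast_eq_natCast_iff _ 1 4).mp (by simpa using h 2 (by omega) even_two)
  exact absurd ((Nat.choose_two_modEq_three_of_eight_dvd h8).symm.trans h1) (by decide)

theorem of_mCoef_two_mul_add_one (k : ℕ) : EvenChooseEqOneMod (mCoef (2 * k + 1)) (2 * k) := by
  obtain h | ⟨p, s, hp, hs, hps, h⟩ := mCoef_eq_one_or_exists (2 * k + 1)
  · rw [h]
    exact one _
  · obtain rfl : p = 2 := by
      have h2 : 2 ∣ p ^ s := hps ▸ ⟨k + 1, by ring⟩
      exact ((Nat.prime_dvd_prime_iff_eq Nat.prime_two hp).mp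
        (Nat.prime_two.dvd_of_dvd_pow h2)).symm
    obtain ⟨s, rfl⟩ := Nat.exists_eq_succ_of_ne_zero hs.ne'
    rw [h]
    exact two_mul_of_succ_eq_two_pow (s := s) (by rw [pow_succ] at hps; omega)

theorem of_mCoef (n : ℕ) : EvenChooseEqOneMod (mCoef n) n := by
  obtain h | ⟨p, s, hp, -, hps, h⟩ := mCoef_eq_one_or_exists n
  · rw [h]
    exact one _
  · rw [h]
    exact of_succ_eq_prime_pow hp hps

theorem prime_dvd_mCoef_mul {k p : ℕ} (h : EvenChooseEqOneMod p (2 * k))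
    (hk : 2 ≤ k) (hp : p.Prime) : p ∣ mCoef (2 * k + 1) * mCoef (2 * k) := by
  obtain rfl | hp2 := eq_or_ne p 2
  · obtain ⟨s, hs⟩ := h.exists_two_mul_add_two_eq_two_pow
    rw [mCoef_eq_of_succ_eq_pow Nat.prime_two (Nat.pos_of_ne_zero (by rintro rfl; simp at hs)) hs]
    exact dvd_mul_right 2 _
  · obtain ⟨r, hr⟩ := h.exists_succ_eq_pow hp hp2 (by omega)
    rw [mCoef_eq_of_succ_eq_pow hp (Nat.pos_of_ne_zero (by rintro rfl; simp at hr; omega)) hr]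
    exact dvd_mul_left p _

end EvenChooseEqOneMod

theorem evenChooseEqOneMod_iff_dvd_mCoef_mul {k M : ℕ} (hk : 2 ≤ k) :
    EvenChooseEqOneMod M (2 * k) ↔ M ∣ mCoef (2 * k + 1) * mCoef (2 * k) := by
  constructor
  · intro h
    have hsq : Squarefree M := Nat.squarefree_iff_prime_squarefree.mpr fun p hp hpp => by
      have hpsq := h.of_dvd (sq p ▸ hpp)
      obtain rfl | hp2 := eq_or_ne p 2
      · exact EvenChooseEqOneMod.not_four hk hpsq
      · exact EvenChooseEqOneMod.not_prime_sq hp hp2 (by omega) hpsq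
    rw [← Nat.prod_primeFactors_of_squarefree hsq]
    exact Finset.prod_primes_dvd _ (fun p hp => (Nat.prime_of_mem_primeFactors hp).prime)
      fun p hp => (h.of_dvd (Nat.dvd_of_mem_primeFactors hp)).prime_dvd_mCoef_mul hk
        (Nat.prime_of_mem_primeFactors hp)
  · intro hM
    have hcop : (mCoef (2 * k + 1)).Coprime (mCoef (2 * k)) :=
      ((Nat.coprime_self_add_left.mpr (Nat.coprime_one_left _)).coprime_dvd_left
        (mCoef_dvd_succ _)).coprime_dvd_right (mCoef_dvd_succ _)
    exact ((EvenChooseEqOneMod.of_mCoef_two_mul_add_one k).mul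
      (EvenChooseEqOneMod.of_mCoef _) hcop).of_dvd hM

theorem natCast_dvd_gcd_choose_sub_one_iff (M k : ℕ) :
    (M : ℤ) ∣ (Icc 1 k).gcd (fun i => ((2 * k).choose (2 * i) : ℤ) - 1) ↔
      EvenChooseEqOneMod M (2 * k) := by
  have hcong : ∀ i, (M : ℤ) ∣ ((2 * k).choose (2 * i) : ℤ) - 1 ↔
      ((2 * k).choose (2 * i) : ZMod M) = 1 := fun i => by
    rw [← ZMod.intCast_eq_intCast_iff_dvd_sub, eq_comm]
    push_cast
    rfl
  rw [Finset.dvd_gcd_iff]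
  constructor
  · rintro h j hj ⟨i, rfl⟩
    rw [← two_mul]
    obtain rfl | hi := Nat.eq_zero_or_pos i
    · simp
    · exact (hcong i).mp (h i (mem_Icc.mpr ⟨hi, by omega⟩))
  · intro h i hi
    exact (hcong i).mpr (h _ (by simp only [mem_Icc] at hi; omega) (even_two_mul i))

theorem gcd_choose_diff (k : ℕ) (hk : 1 < k) :
    (Finset.Icc 1 k).gcd
        (fun i => ((2 * k + 1).choose (2 * i) : ℤ) - (2 * k + 1).choose (2 * i - 1)) =
      (mCoef (2 * k + 1) : ℤ) * mCoef (2 * k) := by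
  set c : ℕ → ℤ := fun i => ((2 * k).choose (2 * i) : ℤ) - 1
  have hpascal : ∀ i ∈ Icc 1 k,
      ((2 * k + 1).choose (2 * i) : ℤ) - (2 * k + 1).choose (2 * i - 1) = c i - c (i - 1) := by
    intro i hi
    obtain ⟨j, rfl⟩ : ∃ j, i = j + 1 := ⟨i - 1, by simp only [mem_Icc] at hi; omega⟩
    rw [show 2 * (j + 1) = 2 * j + 2 by ring, show 2 * j + 2 - 1 = 2 * j + 1 by omega,
      Nat.choose_succ_sub_choose_succ]
    simp only [c, Nat.add_sub_cancel, mul_add_one]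
    ring
  rw [Finset.gcd_congr rfl hpascal, Finset.gcd_Icc_sub_pred c (by simp [c])]
  obtain ⟨g, hg⟩ := Int.eq_ofNat_of_zero_le (Int.nonneg_of_normalize_eq_self normalize_gcd)
  have hdvd : ∀ M : ℕ, M ∣ g ↔ M ∣ mCoef (2 * k + 1) * mCoef (2 * k) := fun M => by
    rw [← Int.natCast_dvd_natCast, ← hg, natCast_dvd_gcd_choose_sub_one_iff,
      evenChooseEqOneMod_iff_dvd_mCoef_mul hk]
  rw [hg, Nat.dvd_antisymm ((hdvd g).mp dvd_rfl) ((hdvd _).mpr dvd_rfl)]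
  push_cast
  rfl
end

section
/- Let k > 1 and suppose 2k + 2 = 2^s for some integer s (necessarily s > 2). Then for every i with 0 < i ≤ k, the number C(2k+1, 2i) − C(2k+1, 2i−1) is divisible by 2, but C(2k+1, 2) − C(2k+1, 1) = 2(2^s − 1)(2^{s−2} − 1) is not divisible by 4. -/
theorem choose_diff_two_pow (k s : ℕ) (hk : 1 < k) (hs : 2 * k + 2 = 2 ^ s) :
    (∀ i : ℕ, 0 < i → i ≤ k →
      (2 : ℤ) ∣ ((2 * k + 1).choose (2 * i) : ℤ) - (2 * k + 1).choose (2 * i - 1)) ∧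
    ((2 * k + 1).choose 2 : ℤ) - (2 * k + 1).choose 1 =
      2 * (2 ^ s - 1) * (2 ^ (s - 2) - 1) ∧
    ¬ (4 : ℤ) ∣ ((2 * k + 1).choose 2 : ℤ) - (2 * k + 1).choose 1 := by
  have hs3 : 3 ≤ s := by
    rcases s with _ | _ | _ | s
    · omega
    · omega
    · omega
    · omega
  obtain ⟨t, ht⟩ : ∃ t, s = t + 2 := ⟨s - 2, by omega⟩
  have ht1 : 1 ≤ t := by omega
  have hp4 : 2 ^ s = 4 * 2 ^ t := by rw [ht]; ring
  have hk1 : k + 1 = 2 * 2 ^ t := by omega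
  have hkZ : (k : ℤ) = 2 * 2 ^ t - 1 := by
    have : (k : ℤ) + 1 = 2 * 2 ^ t := by exact_mod_cast hk1
    linarith
  have h2 : (2 * k + 1).choose 2 = k * (2 * k + 1) := by
    have h1 : (2 * k + 1) * (2 * k + 1 - 1) = 2 * (k * (2 * k + 1)) := by
      have h0 : 2 * k + 1 - 1 = 2 * k := by omega
      rw [h0]; ring
    rw [Nat.choose_two_right, h1, Nat.mul_div_cancel_left _ two_pos]
  refine ⟨?_, ?_, ?_⟩
  · intro i hi hik
    obtain ⟨j, hj⟩ : ∃ j, 2 * i = j + 1 := ⟨2 * i - 1, by omega⟩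
    have hj' : 2 * i - 1 = j := by omega
    have hd : 2 ∣ (2 ^ s).choose (2 * i) :=
      Nat.Prime.dvd_choose_pow Nat.prime_two (by omega) (by omega)
    have hpas : (2 ^ s).choose (2 * i) =
        (2 * k + 1).choose j + (2 * k + 1).choose (j + 1) := by
      have h1 : 2 * k + 2 = (2 * k + 1) + 1 := by ring
      rw [← hs, h1, hj, Nat.choose_succ_succ]
    rw [hpas] at hd
    rw [hj', hj]
    obtain ⟨c, hc⟩ := hd
    have hcz : ((2 * k + 1).choose j : ℤ) + (2 * k + 1).choose (j + 1) = 2 * c := by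
      exact_mod_cast hc
    omega
  · rw [h2, Nat.choose_one_right, ht]
    rw [show t + 2 - 2 = t from by omega]
    push_cast [pow_add]
    rw [hkZ]; ring
  · rw [h2, Nat.choose_one_right]
    intro hdvd
    have hexp : ((k * (2 * k + 1) : ℕ) : ℤ) - ((2 * k + 1 : ℕ) : ℤ) =
        2 * ((2 * (k : ℤ) + 1) * (2 ^ t - 1)) := by
      push_cast
      rw [hkZ]; ring
    rw [hexp] at hdvd
    have hodd : Odd ((2 * (k : ℤ) + 1) * (2 ^ t - 1)) := by
      apply Odd.mul
      · exact ⟨(k : ℤ), by ring⟩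
      · obtain ⟨q, hq⟩ : ∃ q : ℤ, (2 : ℤ) ^ t = 2 * q :=
          ⟨2 ^ (t - 1), by rw [← pow_succ']; congr 1; omega⟩
        exact ⟨q - 1, by rw [hq]; ring⟩
    obtain ⟨c, hc⟩ := hdvd
    obtain ⟨m, hm⟩ := hodd
    omega
end

section
/- Let k > 1 with 2k + 2 not a power of 2. Then there exists i with 0 < i ≤ k such that C(2k+1, 2i) − C(2k+1, 2i−1) is odd. -/
/-!
Write `2k + 2 = 2^v m` with `m` odd; `m ≥ 3` since `2k + 2` is not a power of two, so `2i = 2^v`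
lies in `(0, 2k]`. By Lucas' theorem `C(2^v m, 2^v) ≡ C(m, 1) = m ≡ 1 (mod 2)`, and Pascal's rule
`C(2k+2, 2i) = C(2k+1, 2i-1) + C(2k+1, 2i)` turns this into the oddness of the difference.
-/

theorem Nat.odd_choose_two_pow_mul_two_pow {v m : ℕ} (hm : Odd m) :
    Odd ((2 ^ v * m).choose (2 ^ v)) := by
  have : Fact (Nat.Prime 2) := ⟨Nat.prime_two⟩
  have lucas : (2 ^ v * m).choose (2 ^ v * 1) ≡ m.choose 1 [MOD 2] :=
    Choose.choose_pow_mul_pow_mul_modEq_choose_nat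
  rw [mul_one, Nat.choose_one_right] at lucas
  rw [Nat.odd_iff] at hm ⊢
  rw [← hm]
  exact lucas

theorem Int.odd_choose_sub_choose_pred {n j : ℕ} (hj : 0 < j) (h : Odd ((n + 1).choose j)) :
    Odd ((n.choose j : ℤ) - n.choose (j - 1)) := by
  rw [Nat.choose_succ_left n j hj] at h
  have hsum : (n.choose j : ℤ) - n.choose (j - 1) =
      ((n.choose (j - 1) + n.choose j : ℕ) : ℤ) - 2 * n.choose (j - 1) := by
    push_cast
    ring
  rw [hsum]
  exact (Int.odd_coe_nat _ |>.mpr h).sub_even (even_two_mul _)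

theorem exists_odd_choose_diff_general (k : ℕ) (h : ¬ ∃ s : ℕ, 2 * k + 2 = 2 ^ s) :
    ∃ i : ℕ, 0 < i ∧ i ≤ k ∧
      Odd (((2 * k + 1).choose (2 * i) : ℤ) - (2 * k + 1).choose (2 * i - 1)) := by
  obtain ⟨v, m, hm, hkm⟩ := Nat.exists_eq_two_pow_mul_odd (n := 2 * k + 2) (by omega)
  have hm3 : 3 ≤ m := by
    obtain ⟨t, rfl⟩ := hm
    rcases t with _ | t
    · exact absurd ⟨v, by simpa using hkm⟩ h
    · omega
  obtain ⟨i, rfl⟩ : ∃ i, v = i + 1 := by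
    refine Nat.exists_eq_add_one.mpr (Nat.pos_of_ne_zero ?_)
    rintro rfl
    obtain ⟨t, rfl⟩ := hm
    omega
  have h2i : 2 * 2 ^ i = 2 ^ (i + 1) := (pow_succ' 2 i).symm
  refine ⟨2 ^ i, by positivity, ?_, ?_⟩
  · nlinarith [Nat.one_le_two_pow (n := i)]
  · apply Int.odd_choose_sub_choose_pred (by positivity)
    rw [h2i, show 2 * k + 1 + 1 = 2 ^ (i + 1) * m by omega]
    exact Nat.odd_choose_two_pow_mul_two_pow hm

theorem exists_odd_choose_diff (k : ℕ) (hk : 1 < k) (h : ¬ ∃ s : ℕ, 2 * k + 2 = 2 ^ s) :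
    ∃ i : ℕ, 0 < i ∧ i ≤ k ∧
      Odd (((2 * k + 1).choose (2 * i) : ℤ) - (2 * k + 1).choose (2 * i - 1)) :=
  exists_odd_choose_diff_general k h
end

section
/- Let p be an odd prime and suppose 2k + 1 = p^s with k > 1. Then every difference C(2k+1, 2i) − C(2k+1, 2i−1) with 0 < i ≤ k is divisible by p, and for 2i = p^{s−1} + 1 the difference C(2k+1, 2i) − C(2k+1, 2i−1) is not divisible by p^2. -/
theorem choose_diff_odd_prime_pow (p s k : ℕ) (hp : p.Prime) (hodd : Odd p)
    (hk : 1 < k) (hps : 2 * k + 1 = p ^ s) :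
    (∀ i : ℕ, 0 < i → i ≤ k →
      (p : ℤ) ∣ ((2 * k + 1).choose (2 * i) : ℤ) - (2 * k + 1).choose (2 * i - 1)) ∧
    (∀ i : ℕ, 2 * i = p ^ (s - 1) + 1 →
      ¬ ((p : ℤ) ^ 2 ∣
        ((2 * k + 1).choose (2 * i) : ℤ) - (2 * k + 1).choose (2 * i - 1))) := by
  have hs : s ≠ 0 := by
    rintro rfl; simp at hps; omega
  have hp1 : 1 < p := hp.one_lt
  constructor
  · intro i hi hik
    have h1 : p ∣ (2 * k + 1).choose (2 * i) := by
      rw [hps]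
      exact hp.dvd_choose_pow (by omega) (by omega)
    have h2 : p ∣ (2 * k + 1).choose (2 * i - 1) := by
      rw [hps]
      exact hp.dvd_choose_pow (by omega) (by omega)
    exact dvd_sub (Int.natCast_dvd_natCast.2 h1) (Int.natCast_dvd_natCast.2 h2)
  · intro i h2i
    set j : ℕ := p ^ (s - 1) with hj
    have hjn : j < p ^ s := Nat.pow_lt_pow_right hp1 (by omega)
    -- valuation of the central-type binomial coefficient is exactly 1
    have hmul : emultiplicity p ((p ^ s).choose j) = (1 : ℕ) := by
      have h1 : s - (s - 1) = 1 := by omega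
      rw [hp.emultiplicity_choose_prime_pow hjn.le (Nat.pos_of_ne_zero (by positivity)).ne',
        hj, multiplicity_pow_self_of_prime hp.prime, h1]
    have hC1 : p ∣ (p ^ s).choose j := by
      have := pow_dvd_of_le_emultiplicity (a := p) (b := (p ^ s).choose j)
        (k := 1) hmul.ge
      simpa using this
    have hC2 : ¬ p ^ 2 ∣ (p ^ s).choose j := by
      rw [← emultiplicity_lt_iff_not_dvd, hmul]
      exact_mod_cast Nat.one_lt_two
    obtain ⟨m, hm⟩ := hC1
    have hpm : ¬ p ∣ m := by
      intro ⟨c, hc⟩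
      exact hC2 ⟨c, by rw [hm, hc]; ring⟩
    intro hdvd
    have h2i1 : 2 * i - 1 = j := by omega
    have h2i' : 2 * i = j + 1 := by omega
    rw [h2i1, h2i'] at hdvd
    -- the basic identity: (j+1) * C(n, j+1) = C(n, j) * (n - j)
    have hid : ((2 * k + 1).choose (j + 1) : ℤ) * (j + 1)
        = ((2 * k + 1).choose j : ℤ) * ((2 * k + 1 : ℕ) - j) := by
      have := Nat.choose_succ_right_eq (2 * k + 1) j
      have hcast := congrArg (Nat.cast : ℕ → ℤ) this
      push_cast [Nat.cast_sub (by omega : j ≤ 2 * k + 1)] at hcast ⊢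
      linarith [hcast]
    have key : ((p : ℤ)) ^ 2 ∣ ((2 * k + 1).choose j : ℤ) * ((2 * k + 1 : ℤ) - 2 * j - 1) := by
      have := Dvd.dvd.mul_left hdvd ((j : ℤ) + 1)
      have heq : ((j : ℤ) + 1) * (((2 * k + 1).choose (j + 1) : ℤ) - (2 * k + 1).choose j)
          = ((2 * k + 1).choose j : ℤ) * ((2 * k + 1 : ℤ) - 2 * j - 1) := by
        push_cast [Nat.cast_sub (by omega : j ≤ 2 * k + 1)] at hid ⊢
        linarith [hid]
      rwa [heq] at this
    -- substitute C = p * m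
    have hCm : ((2 * k + 1).choose j : ℤ) = (p : ℤ) * m := by
      rw [hps]; exact_mod_cast congrArg (Nat.cast : ℕ → ℤ) hm
    rw [hCm] at key
    have hpne : (p : ℤ) ≠ 0 := by exact_mod_cast hp.pos.ne'
    have key2 : (p : ℤ) ∣ (m : ℤ) * ((2 * k + 1 : ℤ) - 2 * j - 1) := by
      rcases key with ⟨c, hc⟩
      refine ⟨c, ?_⟩
      have : (p : ℤ) * ((m : ℤ) * ((2 * k + 1 : ℤ) - 2 * j - 1)) = (p : ℤ) * ((p : ℤ) * c) := by
        linear_combination hc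
      exact mul_left_cancel₀ hpne this
    have hpZ : Prime (p : ℤ) := Int.prime_iff_natAbs_prime.2 (by simpa using hp)
    rcases hpZ.dvd_mul.mp key2 with h | h
    · exact hpm (Int.natCast_dvd_natCast.mp h)
    · -- p ∣ p^s - 2 p^(s-1) - 1, impossible
      have hps' : (2 * k + 1 : ℤ) = (p : ℤ) ^ s := by exact_mod_cast hps
      rw [hps'] at h
      have hpd : (p : ℤ) ∣ (p : ℤ) ^ s := dvd_pow_self _ hs
      rcases Nat.eq_or_lt_of_le (Nat.one_le_iff_ne_zero.2 hs) with h1s | h2s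
      · -- s = 1 : j = 1, p ∣ p - 3 ⇒ p ∣ 3, but p = 2k+1 ≥ 5
        have hj1 : j = 1 := by rw [hj, ← h1s]; simp
        have hp5 : 5 ≤ p := by
          have : p = 2 * k + 1 := by rw [hps, ← h1s]; simp
          omega
        have h3 : (p : ℤ) ∣ 3 := by
          have := dvd_sub hpd h
          rw [hj1] at this
          have heq : (p : ℤ) ^ s - ((p : ℤ) ^ s - 2 * (1 : ℕ) - 1) = 3 := by push_cast; ring
          rwa [heq] at this
        have := Int.le_of_dvd (by norm_num) h3
        omega
      · -- s ≥ 2 : p ∣ 2 j, so p ∣ 1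
        have hpj : (p : ℤ) ∣ (j : ℤ) := by
          rw [hj]
          exact_mod_cast dvd_pow_self (p : ℤ) (by omega : s - 1 ≠ 0)
        have h1 : (p : ℤ) ∣ 1 := by
          have := dvd_sub (dvd_sub hpd h) (hpj.mul_left 2)
          have heq : (p : ℤ) ^ s - ((p : ℤ) ^ s - 2 * (j : ℤ) - 1) - 2 * (j : ℤ) = 1 := by ring
          rwa [heq] at this
        have := Int.le_of_dvd one_pos h1
        omega
end

section
/- Let p be an odd prime and k > 1 with 2k + 1 not a power of p. Then there exists i with 0 < i ≤ k such that C(2k+1, 2i) − C(2k+1, 2i−1) is not divisible by p. -/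
/-!
For `n = 2k + 1` we have `2 (C(n,2) - C(n,1)) = n (n - 3)`, so `i = 1` works unless `p ∣ n`
or `n ≡ 3 (mod p)`. In both remaining cases `n mod p < p - 1`, so for every nonzero multiple `j`
of `p` the last base-`p` digit `p - 1` of `j - 1` exceeds that of `n`, and Lucas' theorem gives
`p ∣ C(n, j - 1)`. It remains to pick an even such `j < n` with `p ∤ C(n, j) = C(n, n - j)`:
if `n ≡ 3` (so `p ≥ 5`) take `j = n - 3`, as `C(n, 3) ≡ C(3, 3) = 1`; if `p ∣ n` take
`j = n - p^m` with `p^m < n` the largest power of `p` not above `n`, as `C(n, p^m)` is congruent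
to the leading base-`p` digit of `n`.
-/

open Nat

theorem Nat.div_pow_log_lt {b : ℕ} (hb : 1 < b) (n : ℕ) : n / b ^ log b n < b :=
  Nat.div_lt_of_lt_mul (by rw [← pow_succ]; exact lt_pow_succ_log_self hb n)

theorem two_mul_choose_two_sub_choose_one (n : ℕ) :
    2 * ((n.choose 2 : ℤ) - n.choose 1) = n * (n - 3) := by
  cases n with
  | zero => simp
  | succ m =>
    have h : ((m + 1 : ℕ) : ℤ) * m = ((m + 1).choose 2 : ℕ) * 2 := by
      exact_mod_cast choose_one_right m ▸ add_one_mul_choose_eq m 1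
    rw [choose_one_right]
    push_cast at h ⊢
    linear_combination -h

theorem dvd_or_mod_eq_three_of_dvd_choose_two_sub_choose_one {p n : ℕ} (hp : p.Prime)
    (hodd : Odd p) (h : (p : ℤ) ∣ (n.choose 2 : ℤ) - n.choose 1) : p ∣ n ∨ n % p = 3 := by
  have hmul : (p : ℤ) ∣ n * (n - 3) :=
    two_mul_choose_two_sub_choose_one n ▸ dvd_mul_of_dvd_right h 2
  rcases (prime_iff_prime_int.mp hp).dvd_or_dvd hmul with h | h
  · exact .inl (Int.natCast_dvd_natCast.mp h)
  · have h3 : 3 % p = n % p := Nat.modEq_iff_dvd.mpr (by exact_mod_cast h)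
    have hp3 : 3 ≤ p := by have := hp.two_le; have := Nat.odd_iff.mp hodd; omega
    rcases hp3.eq_or_lt with rfl | hp3
    · exact .inl (dvd_of_mod_eq_zero h3.symm)
    · exact .inr (h3 ▸ mod_eq_of_lt hp3)

namespace Choose

variable {p : ℕ} [Fact p.Prime]

theorem choose_modEq_choose_mod_of_lt {n k : ℕ} (hk : k < p) :
    choose n k ≡ choose (n % p) k [MOD p] := by
  simpa [mod_eq_of_lt hk, div_eq_of_lt hk] using
    choose_modEq_choose_mod_mul_choose_div_nat (n := n) (k := k) (p := p)

theorem choose_pow_modEq (n m : ℕ) : choose n (p ^ m) ≡ n / p ^ m [MOD p] := by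
  have hp := (Fact.out : p.Prime).pos
  rw [← Int.natCast_modEq_iff]
  refine (choose_modEq_choose_mul_prod_range_choose m).trans ?_
  have hdigit : ∀ i ∈ Finset.range m, choose (n / p ^ i % p) (p ^ m / p ^ i % p) = 1 := by
    intro i hi
    rw [Nat.pow_div (Finset.mem_range.mp hi).le hp, Nat.pow_mod, mod_self,
      zero_pow (Nat.sub_ne_zero_of_lt (Finset.mem_range.mp hi)), zero_mod, choose_zero_right]
  rw [Finset.prod_eq_one hdigit, Nat.div_self (pow_pos hp m), choose_one_right]
  simp [Int.ModEq.refl]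

theorem dvd_choose_of_mod_lt {n k : ℕ} (h : n % p < k % p) : p ∣ choose n k := by
  rw [← modEq_zero_iff_dvd]
  refine choose_modEq_choose_mod_mul_choose_div_nat.trans ?_
  rw [choose_eq_zero_of_lt h, zero_mul]

theorem dvd_choose_pred_of_dvd {n j : ℕ} (hj : p ∣ j) (hj0 : j ≠ 0) (hn : n % p < p - 1) :
    p ∣ choose n (j - 1) := by
  have hp := (Fact.out : p.Prime).pos
  obtain ⟨c, rfl⟩ := hj
  obtain ⟨c, rfl⟩ := exists_eq_succ_of_ne_zero (right_ne_zero_of_mul hj0)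
  refine dvd_choose_of_mod_lt ?_
  rwa [show p * (c + 1) - 1 = p * c + (p - 1) by rw [mul_add_one]; omega, mul_add_mod,
    mod_eq_of_lt (sub_lt hp one_pos)]

theorem not_dvd_choose_sub_choose_pred {n j : ℕ} (hj : p ∣ j) (hj0 : j ≠ 0)
    (hn : n % p < p - 1) (hc : ¬ p ∣ choose n j) :
    ¬ (p : ℤ) ∣ (choose n j : ℤ) - choose n (j - 1) := by
  rw [dvd_sub_left (Int.natCast_dvd_natCast.mpr (dvd_choose_pred_of_dvd hj hj0 hn))]
  exact_mod_cast hc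

theorem not_dvd_choose_sub_pow_log_sub_choose_pred {n : ℕ} (hpn : p ∣ n)
    (hn : p ^ log p n < n) :
    ¬ (p : ℤ) ∣ (choose n (n - p ^ log p n) : ℤ) - choose n (n - p ^ log p n - 1) := by
  have hp : p.Prime := Fact.out
  have hm : log p n ≠ 0 := (log_pos hp.one_lt (le_of_dvd (by omega) hpn)).ne'
  refine not_dvd_choose_sub_choose_pred (dvd_sub hpn (dvd_pow_self p hm)) (by omega)
    (mod_eq_zero_of_dvd hpn ▸ Nat.sub_pos_of_lt hp.one_lt) ?_
  rw [choose_symm hn.le, (choose_pow_modEq n _).dvd_iff dvd_rfl]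
  exact not_dvd_of_pos_of_lt (div_pos (pow_log_le_self p (by omega)) (pow_pos hp.pos _))
    (div_pow_log_lt hp.one_lt n)

theorem not_dvd_choose_sub_three_sub_choose_pred {n : ℕ} (h3 : n % p = 3) (hp : 3 < p - 1)
    (hn : 3 < n) :
    ¬ (p : ℤ) ∣ (choose n (n - 3) : ℤ) - choose n (n - 3 - 1) := by
  refine not_dvd_choose_sub_choose_pred (h3 ▸ dvd_sub_mod n) (by omega) (by omega) ?_
  rw [choose_symm hn.le, (choose_modEq_choose_mod_of_lt (by omega)).dvd_iff dvd_rfl, h3,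
    choose_self]
  exact (Fact.out : p.Prime).not_dvd_one

end Choose

open Choose in
theorem exists_choose_diff_not_dvd (p k : ℕ) (hp : p.Prime) (hodd : Odd p)
    (hk : 1 < k) (h : ¬ ∃ s : ℕ, 2 * k + 1 = p ^ s) :
    ∃ i : ℕ, 0 < i ∧ i ≤ k ∧
      ¬ ((p : ℤ) ∣ ((2 * k + 1).choose (2 * i) : ℤ) - (2 * k + 1).choose (2 * i - 1)) := by
  have := Fact.mk hp
  by_cases h1 : (p : ℤ) ∣ ((2 * k + 1).choose 2 : ℤ) - (2 * k + 1).choose 1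
  swap
  · exact ⟨1, one_pos, hk.le, h1⟩
  set n := 2 * k + 1
  rcases dvd_or_mod_eq_three_of_dvd_choose_two_sub_choose_one hp hodd h1 with hpn | h3
  · have hq : 0 < p ^ log p n := pow_pos hp.pos _
    have hqn : p ^ log p n < n :=
      (pow_log_le_self p (by omega)).lt_of_ne fun he => h ⟨_, he.symm⟩
    obtain ⟨i, hi⟩ : Even (n - p ^ log p n) := Nat.Odd.sub_odd (odd_two_mul_add_one k) hodd.pow
    refine ⟨i, by omega, by omega, ?_⟩
    rw [show 2 * i = n - p ^ log p n by omega]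
    exact not_dvd_choose_sub_pow_log_sub_choose_pred hpn hqn
  · have hp3 : 3 < p - 1 := by have := mod_lt n hp.pos; have := Nat.odd_iff.mp hodd; omega
    refine ⟨k - 1, by omega, by omega, ?_⟩
    rw [show 2 * (k - 1) = n - 3 by omega]
    exact not_dvd_choose_sub_three_sub_choose_pred h3 hp3 (by omega)
end

section
/- Let k > 2 and suppose 2k = 2^s for some integer s (necessarily s > 2). Then for every i with 0 < i < k, the number a_i = −2i + Σ_{j=1}^{2i} (−1)^j C(2k, j) is divisible by 2, and a_1 = −2 − 2^s + 2^{s−1}(2^s − 1) is not divisible by 4. -/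
/-!
Since `2k = 2^s`, every `C(2k, j)` with `0 < j < 2k` is even, which gives the first claim
because `2i < 2k`. For `i = 1` the sum has two terms and `a_1 = -2 - 2k + C(2k, 2) = 2k² - 3k - 2`;
as `k > 2` is a power of two, `4 ∣ k`, so `a_1 ≡ -2 (mod 4)`.
-/

/-- `aCoef k i = -2i + Σ_{j=1}^{2i} (-1)^j C(2k, j)`. -/
def aCoef (k i : ℕ) : ℤ :=
  -2 * (i : ℤ) + ∑ j ∈ Finset.Icc 1 (2 * i), (-1 : ℤ) ^ j * ((2 * k).choose j : ℤ)

lemma cast_choose_two_mul_two (k : ℕ) : ((2 * k).choose 2 : ℤ) = k * (2 * k - 1) := by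
  have h := Nat.choose_two_right (2 * k)
  rw [mul_assoc, Nat.mul_div_cancel_left _ two_pos] at h
  rcases k.eq_zero_or_pos with rfl | hk
  · simp
  · rw [h]; push_cast [show 1 ≤ 2 * k by omega]; ring

lemma aCoef_one (k : ℕ) : aCoef k 1 = 2 * k ^ 2 - 3 * k - 2 := by
  rw [aCoef, show Finset.Icc 1 (2 * 1) = {1, 2} from rfl, Finset.sum_pair (by norm_num),
    Nat.choose_one_right, cast_choose_two_mul_two]
  push_cast
  ring

lemma two_dvd_aCoef {k s i : ℕ} (hs : 2 * k = 2 ^ s) (hik : i < k) : (2 : ℤ) ∣ aCoef k i := by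
  refine dvd_add (Dvd.intro (-(i : ℤ)) (by ring))
    (Finset.dvd_sum fun j hj => Dvd.dvd.mul_left ?_ _)
  rw [Finset.mem_Icc] at hj
  rw [hs]
  exact_mod_cast Nat.prime_two.dvd_choose_pow (by omega) (by omega)

lemma not_four_dvd_aCoef_one {k : ℕ} (hk : 4 ∣ k) : ¬ (4 : ℤ) ∣ aCoef k 1 := by
  obtain ⟨m, rfl⟩ := hk
  rw [aCoef_one, show 2 * ((4 * m : ℕ) : ℤ) ^ 2 - 3 * (4 * m : ℕ) - 2
      = 4 * (8 * m ^ 2 - 3 * m - 1) + 2 by push_cast; ring]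
  intro h
  have := (Int.dvd_add_right (dvd_mul_right 4 _)).mp h
  norm_num at this

lemma eq_two_pow_pred_of_two_mul_eq {k s : ℕ} (hs : 2 * k = 2 ^ s) : k = 2 ^ (s - 1) := by
  cases s with
  | zero => omega
  | succ s => rw [pow_succ'] at hs; simpa using hs

lemma four_dvd_of_two_mul_eq_two_pow {k s : ℕ} (hk : 2 < k) (hs : 2 * k = 2 ^ s) : 4 ∣ k := by
  rw [eq_two_pow_pred_of_two_mul_eq hs] at hk ⊢
  have hlt : 2 ^ 1 < 2 ^ (s - 1) := by simpa using hk
  exact pow_dvd_pow 2 ((Nat.pow_lt_pow_iff_right one_lt_two).mp hlt)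

theorem aCoef_two_pow (k s : ℕ) (hk : 2 < k) (hs : 2 * k = 2 ^ s) :
    (∀ i : ℕ, 0 < i → i < k → (2 : ℤ) ∣ aCoef k i) ∧
    aCoef k 1 = -2 - 2 ^ s + 2 ^ (s - 1) * (2 ^ s - 1) ∧
    ¬ (4 : ℤ) ∣ aCoef k 1 := by
  refine ⟨fun i _ hik => two_dvd_aCoef hs hik, ?_,
    not_four_dvd_aCoef_one (four_dvd_of_two_mul_eq_two_pow hk hs)⟩
  have hk' : (k : ℤ) = 2 ^ (s - 1) := by exact_mod_cast eq_two_pow_pred_of_two_mul_eq hs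
  have hs' : (2 : ℤ) ^ s = 2 * k := by exact_mod_cast hs.symm
  rw [aCoef_one, hs', ← hk']
  ring
end

section
/- Let p be an odd prime, s ≥ 2, and set 2k = p^s − 1. Then C(2k, p^{s−1}) ≡ p − 1 (mod p^2), and consequently C(2k, p^{s−1}) − 2k ≡ p (mod p^2). -/
open Finset

lemma key_prod (p s : ℕ) (hp : p.Prime) (hs : 2 ≤ s) :
    ∀ n, n < p ^ (s - 1) →
      ((p : ℤ) ^ 2 * (p : ℤ) ^ (padicValNat p n.factorial)) ∣
        (∏ j ∈ Finset.range n, ((p : ℤ) ^ s - (j + 1))) - (-1) ^ n * n.factorial := by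
  haveI : Fact p.Prime := ⟨hp⟩
  intro n
  induction n with
  | zero => intro _; simp
  | succ n ih =>
    intro hlt
    have hn : n < p ^ (s - 1) := lt_trans (Nat.lt_succ_self n) hlt
    have ihd := ih hn
    -- valuation of n+1 is at most s - 2
    have hv : padicValNat p (n + 1) + 2 ≤ s := by
      by_contra h
      push_neg at h
      have h1 : s - 1 ≤ padicValNat p (n + 1) := by omega
      have h2 : p ^ (s - 1) ∣ (n + 1) :=
        dvd_trans (pow_dvd_pow p h1) pow_padicValNat_dvd
      have := Nat.le_of_dvd (Nat.succ_pos n) h2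
      omega
    have hVsucc : padicValNat p (n + 1).factorial
        = padicValNat p (n + 1) + padicValNat p n.factorial := by
      rw [Nat.factorial_succ]
      exact padicValNat.mul (Nat.succ_ne_zero n) n.factorial_ne_zero
    set V := padicValNat p n.factorial with hV
    set v := padicValNat p (n + 1) with hv'
    have hdvd1 : ((p : ℤ)) ^ v ∣ ((p : ℤ) ^ s - (n + 1)) := by
      have h1 : ((p : ℤ)) ^ v ∣ ((n : ℤ) + 1) := by
        have := pow_padicValNat_dvd (p := p) (n := n + 1)
        exact_mod_cast Int.natCast_dvd_natCast.mpr this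
      have h2 : ((p : ℤ)) ^ v ∣ (p : ℤ) ^ s := pow_dvd_pow _ (by omega)
      exact dvd_sub h2 h1
    have hdvd2 : ((p : ℤ)) ^ (V + v + 2) ∣ ((-1 : ℤ)) ^ n * n.factorial * (p : ℤ) ^ s := by
      have h1 : ((p : ℤ)) ^ V ∣ (n.factorial : ℤ) := by
        exact_mod_cast Int.natCast_dvd_natCast.mpr (pow_padicValNat_dvd (p := p))
      have h2 : ((p : ℤ)) ^ (v + 2) ∣ (p : ℤ) ^ s := pow_dvd_pow _ hv
      have h1' : ((p : ℤ)) ^ V ∣ ((-1 : ℤ)) ^ n * n.factorial := Dvd.dvd.mul_left h1 _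
      calc ((p : ℤ)) ^ (V + v + 2) = (p : ℤ) ^ V * (p : ℤ) ^ (v + 2) := by ring
        _ ∣ ((-1 : ℤ)) ^ n * n.factorial * (p : ℤ) ^ s := mul_dvd_mul h1' h2
    have heq : (∏ j ∈ Finset.range (n + 1), ((p : ℤ) ^ s - (j + 1)))
        - (-1) ^ (n + 1) * (n + 1).factorial
        = ((∏ j ∈ Finset.range n, ((p : ℤ) ^ s - (j + 1))) - (-1) ^ n * n.factorial)
            * ((p : ℤ) ^ s - (n + 1))
          + (-1) ^ n * n.factorial * (p : ℤ) ^ s := by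
      rw [Finset.prod_range_succ, Nat.factorial_succ]
      push_cast
      ring
    rw [heq, hVsucc]
    have goal_eq : ((p : ℤ)) ^ 2 * (p : ℤ) ^ (v + V) = (p : ℤ) ^ (V + v + 2) := by ring
    rw [goal_eq]
    refine dvd_add ?_ hdvd2
    have : ((p : ℤ)) ^ (V + v + 2) = ((p : ℤ) ^ 2 * (p : ℤ) ^ V) * (p : ℤ) ^ v := by ring
    rw [this]
    exact mul_dvd_mul ihd hdvd1

theorem choose_mod_p_sq (p s k : ℕ) (hp : p.Prime) (hodd : Odd p) (hs : 2 ≤ s)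
    (hk : 2 * k = p ^ s - 1) :
    ((2 * k).choose (p ^ (s - 1)) : ℤ) ≡ (p : ℤ) - 1 [ZMOD (p : ℤ) ^ 2] ∧
    ((2 * k).choose (p ^ (s - 1)) : ℤ) - 2 * k ≡ (p : ℤ) [ZMOD (p : ℤ) ^ 2] := by
  haveI : Fact p.Prime := ⟨hp⟩
  have hp2 : 2 ≤ p := hp.two_le
  set m := p ^ (s - 1) with hm
  have hm1 : 1 ≤ m := Nat.one_le_pow _ _ (by omega)
  have hmlt : m < p ^ s := Nat.pow_lt_pow_right (by omega) (by omega)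
  have hps1 : 1 ≤ p ^ s := Nat.one_le_pow _ _ (by omega)
  have hmle : m ≤ 2 * k := by omega
  have hcast2k : ((2 * k : ℕ) : ℤ) = (p : ℤ) ^ s - 1 := by
    have : ((2 * k : ℕ) : ℤ) = ((p ^ s - 1 : ℕ) : ℤ) := by rw [hk]
    rw [this]
    push_cast [Nat.cast_sub hps1]
    ring
  -- descending factorial identity
  have hdesc : ((2 * k).choose m : ℤ) * (m.factorial : ℤ)
      = ∏ j ∈ Finset.range m, ((p : ℤ) ^ s - (j + 1)) := by
    have h1 : (2 * k).descFactorial m = m.factorial * (2 * k).choose m :=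
      Nat.descFactorial_eq_factorial_mul_choose _ _
    have h2 : ((2 * k).descFactorial m : ℤ) = ∏ j ∈ Finset.range m, ((p : ℤ) ^ s - (j + 1)) := by
      rw [Nat.descFactorial_eq_prod_range]
      push_cast
      refine Finset.prod_congr rfl ?_
      intro j hj
      have hjm : j < m := Finset.mem_range.mp hj
      rw [Nat.cast_sub (by omega : j ≤ 2 * k)]
      rw [hcast2k]
      ring
    rw [← h2, h1]
    push_cast
    ring
  -- split off last factor
  have hsplit : (∏ j ∈ Finset.range m, ((p : ℤ) ^ s - (j + 1)))
      = (∏ j ∈ Finset.range (m - 1), ((p : ℤ) ^ s - (j + 1))) * ((p : ℤ) ^ s - m) := by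
    conv_lhs => rw [show m = (m - 1) + 1 from by omega]
    rw [Finset.prod_range_succ]
    have h : ((m - 1 : ℕ) : ℤ) + 1 = (m : ℤ) := by omega
    rw [h]
  set A : ℤ := ((2 * k).choose m : ℤ) with hA
  set H : ℤ := ∏ j ∈ Finset.range (m - 1), ((p : ℤ) ^ s - (j + 1)) with hH
  -- p^s - m = m * (p - 1), and m! = m * (m-1)!
  have hfac : (m.factorial : ℤ) = (m : ℤ) * ((m - 1).factorial : ℤ) := by
    have : m.factorial = m * (m - 1).factorial := by
      conv_lhs => rw [show m = (m - 1) + 1 by omega]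
      rw [Nat.factorial_succ]
      congr 1
      omega
    exact_mod_cast this
  have hpsm : ((p : ℤ) ^ s - (m : ℤ)) = (m : ℤ) * ((p : ℤ) - 1) := by
    have h1 : ((m : ℕ) : ℤ) = (p : ℤ) ^ (s - 1) := by rw [hm]; push_cast; ring
    have hps : (p : ℤ) ^ s = (p : ℤ) ^ (s - 1) * (p : ℤ) := by
      rw [← pow_succ]
      congr 1
      omega
    rw [h1, hps]
    ring
  have hmne : (m : ℤ) ≠ 0 := by exact_mod_cast (by omega : m ≠ 0)
  have hmain : A * ((m - 1).factorial : ℤ) = ((p : ℤ) - 1) * H := by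
    have h := hdesc
    rw [hsplit, hfac, hpsm] at h
    have h' : (m : ℤ) * (A * ((m - 1).factorial : ℤ)) = (m : ℤ) * (((p : ℤ) - 1) * H) := by
      ring_nf
      ring_nf at h
      linarith [h]
    exact mul_left_cancel₀ hmne h'
  -- key congruence
  set V := padicValNat p (m - 1).factorial with hV
  have hkey := key_prod p s hp hs (m - 1) (by omega)
  have hmodd : Odd m := hodd.pow
  have hmeven : Even (m - 1) := by
    rcases hmodd with ⟨t, ht⟩
    exact ⟨t, by omega⟩
  rw [hmeven.neg_one_pow, one_mul] at hkey
  -- (A - (p-1)) * (m-1)! = (p-1) * (H - (m-1)!)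
  have hkey2 : ((p : ℤ) ^ 2 * (p : ℤ) ^ V) ∣ (A - ((p : ℤ) - 1)) * ((m - 1).factorial : ℤ) := by
    have : (A - ((p : ℤ) - 1)) * ((m - 1).factorial : ℤ)
        = ((p : ℤ) - 1) * (H - ((m - 1).factorial : ℤ)) := by
      have := hmain; ring_nf; ring_nf at this; linarith [this]
    rw [this]
    exact Dvd.dvd.mul_left hkey _
  -- write (m-1)! = p^V * w with p ∤ w
  set w : ℕ := (m - 1).factorial / p ^ V with hw
  have hdvdV : p ^ V ∣ (m - 1).factorial := pow_padicValNat_dvd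
  have hfw : (m - 1).factorial = p ^ V * w := (Nat.mul_div_cancel' hdvdV).symm
  have hpw : ¬ (p : ℤ) ∣ (w : ℤ) := by
    have h1 : ¬ p ∣ w := by
      have := Nat.not_dvd_ordCompl hp (m - 1).factorial_ne_zero
      rwa [Nat.factorization_def _ hp, ← hV, ← hw] at this
    exact_mod_cast fun h => h1 (Int.natCast_dvd_natCast.mp h)
  have hpVne : ((p : ℤ)) ^ V ≠ 0 := pow_ne_zero _ (by exact_mod_cast (by omega : p ≠ 0))
  have hdvd : ((p : ℤ)) ^ 2 ∣ (A - ((p : ℤ) - 1)) * (w : ℤ) := by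
    have h1 : ((p : ℤ) ^ 2 * (p : ℤ) ^ V) ∣ ((A - ((p : ℤ) - 1)) * (w : ℤ)) * (p : ℤ) ^ V := by
      have : ((A - ((p : ℤ) - 1)) * (w : ℤ)) * (p : ℤ) ^ V
          = (A - ((p : ℤ) - 1)) * ((m - 1).factorial : ℤ) := by
        rw [hfw]; push_cast; ring
      rw [this]; exact hkey2
    have h2 := (mul_dvd_mul_iff_right hpVne).mp h1
    exact h2
  have hcop : IsCoprime ((p : ℤ) ^ 2) (w : ℤ) := by
    have hprime : Prime (p : ℤ) := Nat.prime_iff_prime_int.mp hp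
    exact (hprime.irreducible.coprime_iff_not_dvd.mpr hpw).pow_left
  have hfinal : ((p : ℤ)) ^ 2 ∣ A - ((p : ℤ) - 1) := hcop.dvd_of_dvd_mul_right hdvd
  have hmod1 : A ≡ (p : ℤ) - 1 [ZMOD (p : ℤ) ^ 2] := by
    refine (Int.modEq_iff_dvd.mpr ?_).symm
    exact hfinal
  constructor
  · exact hmod1
  · have h2k : ((2 * k : ℕ) : ℤ) ≡ (-1 : ℤ) [ZMOD (p : ℤ) ^ 2] := by
      refine (Int.modEq_iff_dvd.mpr ?_).symm
      rw [hcast2k]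
      have : (p : ℤ) ^ s - 1 - (-1) = (p : ℤ) ^ s := by ring
      rw [this]
      exact pow_dvd_pow _ hs
    have := hmod1.sub h2k
    have heq : (p : ℤ) - 1 - (-1) = (p : ℤ) := by ring
    rw [heq] at this
    have h2 : ((2 * k : ℕ) : ℤ) = 2 * (k : ℤ) := by push_cast; ring
    rw [h2] at this
    exact this
end

section
/- In the graded ring Z[u,v]/(u^{n_1+1}, v^{n_2+1} − u v^{n_2}) with deg u = deg v = 2, where n_1, n_2 are positive integers, the element (v − u)^{n_1+n_2} + n_2 v^{n_1+n_2} equals (Σ_{j=0}^{n_1} (−1)^j C(n_1+n_2, j) + n_2) · u^{n_1} v^{n_2}. -/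
/-!
The relation `v^{n₂+1} = u v^{n₂}` lets every power of `v` beyond `v^{n₂}` be traded for a power
of `u`, so each degree-`(n₁+n₂)` monomial `u^a v^{n₁+n₂-a}` with `a ≤ n₁` collapses to
`u^{n₁} v^{n₂}`, while those with `a > n₁` vanish because `u^{n₁+1} = 0`. Expanding `(v - u)^{n₁+n₂}`
by the binomial theorem, only the terms `j ≤ n₁` survive, each contributing `(-1)^j C(n₁+n₂, j)`;
similarly `v^{n₁+n₂} = u^{n₁} v^{n₂}`.
-/

open Finset MvPolynomial

section

variable {R : Type*}

theorem pow_add_eq_of_pow_succ_eq [CommMonoid R] {u v : R} {n₂ : ℕ}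
    (hv : v ^ (n₂ + 1) = u * v ^ n₂) (k : ℕ) : v ^ (n₂ + k) = u ^ k * v ^ n₂ := by
  induction k with
  | zero => simp
  | succ k ih =>
    calc v ^ (n₂ + (k + 1)) = v ^ (n₂ + k) * v := by rw [← add_assoc, pow_succ]
      _ = u ^ k * v ^ (n₂ + 1) := by rw [ih, pow_succ, mul_assoc]
      _ = u ^ (k + 1) * v ^ n₂ := by rw [hv, pow_succ, mul_assoc]

theorem pow_mul_pow_sub_eq_of_pow_succ_eq [CommMonoid R] {u v : R} {n₁ n₂ a : ℕ}
    (hv : v ^ (n₂ + 1) = u * v ^ n₂) (ha : a ≤ n₁) :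
    u ^ a * v ^ (n₁ + n₂ - a) = u ^ n₁ * v ^ n₂ := by
  rw [show n₁ + n₂ - a = n₂ + (n₁ - a) by omega, pow_add_eq_of_pow_succ_eq hv, ← mul_assoc,
    ← pow_add, Nat.add_sub_cancel' ha]

theorem sub_pow_eq_sum_neg_one_pow_mul_choose [CommRing R] (u v : R) (n : ℕ) :
    (v - u) ^ n = ∑ j ∈ range (n + 1), (-1) ^ j * n.choose j * (u ^ j * v ^ (n - j)) := by
  rw [sub_eq_neg_add, add_pow]
  refine sum_congr rfl fun j _ => ?_
  rw [neg_pow]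
  ring

theorem sub_pow_eq_sum_choose_mul_of_pow_succ_eq [CommRing R] {u v : R} {n₁ n₂ : ℕ}
    (hu : u ^ (n₁ + 1) = 0) (hv : v ^ (n₂ + 1) = u * v ^ n₂) :
    (v - u) ^ (n₁ + n₂) =
      ((∑ j ∈ range (n₁ + 1), (-1 : ℤ) ^ j * ((n₁ + n₂).choose j : ℤ) : ℤ) : R) *
        (u ^ n₁ * v ^ n₂) := by
  have high_vanish : ∀ j ∈ range (n₁ + n₂ + 1), j ∉ range (n₁ + 1) →
      (-1 : R) ^ j * (n₁ + n₂).choose j * (u ^ j * v ^ (n₁ + n₂ - j)) = 0 := by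
    intro j _ hj
    rw [pow_eq_zero_of_le (by simpa using hj) hu, zero_mul, mul_zero]
  rw [sub_pow_eq_sum_neg_one_pow_mul_choose, ← sum_subset (by simp) high_vanish, Int.cast_sum,
    sum_mul]
  refine sum_congr rfl fun j hj => ?_
  rw [pow_mul_pow_sub_eq_of_pow_succ_eq hv (by simpa [Nat.lt_succ_iff] using hj)]
  push_cast
  ring

theorem sub_pow_add_mul_pow_eq_of_pow_succ_eq [CommRing R] {u v : R} {n₁ n₂ : ℕ}
    (hu : u ^ (n₁ + 1) = 0) (hv : v ^ (n₂ + 1) = u * v ^ n₂) :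
    (v - u) ^ (n₁ + n₂) + n₂ * v ^ (n₁ + n₂) =
      ((∑ j ∈ range (n₁ + 1), (-1 : ℤ) ^ j * ((n₁ + n₂).choose j : ℤ) + n₂ : ℤ) : R) *
        (u ^ n₁ * v ^ n₂) := by
  have hvn : v ^ (n₁ + n₂) = u ^ n₁ * v ^ n₂ := by rw [add_comm, pow_add_eq_of_pow_succ_eq hv]
  rw [sub_pow_eq_sum_choose_mul_of_pow_succ_eq hu hv, hvn]
  push_cast
  ring

end

theorem sn_L_general (n₁ n₂ : ℕ) :
    Ideal.Quotient.mk
        (Ideal.span {(X 0 : MvPolynomial (Fin 2) ℤ) ^ (n₁ + 1),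
          (X 1 : MvPolynomial (Fin 2) ℤ) ^ (n₂ + 1) - X 0 * X 1 ^ n₂})
        ((X 1 - X 0) ^ (n₁ + n₂) + (n₂ : MvPolynomial (Fin 2) ℤ) * X 1 ^ (n₁ + n₂)) =
      Ideal.Quotient.mk
        (Ideal.span {(X 0 : MvPolynomial (Fin 2) ℤ) ^ (n₁ + 1),
          (X 1 : MvPolynomial (Fin 2) ℤ) ^ (n₂ + 1) - X 0 * X 1 ^ n₂})
        (C ((∑ j ∈ Finset.range (n₁ + 1), (-1 : ℤ) ^ j * ((n₁ + n₂).choose j : ℤ)) + n₂) *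
          (X 0 ^ n₁ * X 1 ^ n₂)) := by
  set mk := Ideal.Quotient.mk (Ideal.span {(X 0 : MvPolynomial (Fin 2) ℤ) ^ (n₁ + 1),
    (X 1 : MvPolynomial (Fin 2) ℤ) ^ (n₂ + 1) - X 0 * X 1 ^ n₂})
  have hu : mk (X 0) ^ (n₁ + 1) = 0 := by
    rw [← map_pow, Ideal.Quotient.eq_zero_iff_mem]
    exact Ideal.subset_span (by simp)
  have hv : mk (X 1) ^ (n₂ + 1) = mk (X 0) * mk (X 1) ^ n₂ := by
    rw [← map_pow, ← map_pow, ← map_mul, Ideal.Quotient.eq]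
    exact Ideal.subset_span (by simp)
  simpa only [map_add, map_mul, map_pow, map_sub, map_natCast, eq_intCast, map_intCast,
    Int.cast_add, Int.cast_natCast] using
    sub_pow_add_mul_pow_eq_of_pow_succ_eq hu hv

open MvPolynomial in
/-- In `H^*(L(n₁,n₂)) = ℤ[u,v]/(u^{n₁+1}, v^{n₂+1} - u v^{n₂})` the class
`(v-u)^{n₁+n₂} + n₂ v^{n₁+n₂}` equals `(Σ_{j=0}^{n₁} (-1)^j C(n₁+n₂,j) + n₂) u^{n₁} v^{n₂}`. -/
theorem sn_L (n₁ n₂ : ℕ) (h₁ : 0 < n₁) (h₂ : 0 < n₂) :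
    Ideal.Quotient.mk
        (Ideal.span {(X 0 : MvPolynomial (Fin 2) ℤ) ^ (n₁ + 1),
          (X 1 : MvPolynomial (Fin 2) ℤ) ^ (n₂ + 1) - X 0 * X 1 ^ n₂})
        ((X 1 - X 0) ^ (n₁ + n₂) + (n₂ : MvPolynomial (Fin 2) ℤ) * X 1 ^ (n₁ + n₂)) =
      Ideal.Quotient.mk
        (Ideal.span {(X 0 : MvPolynomial (Fin 2) ℤ) ^ (n₁ + 1),
          (X 1 : MvPolynomial (Fin 2) ℤ) ^ (n₂ + 1) - X 0 * X 1 ^ n₂})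
        (C ((∑ j ∈ Finset.range (n₁ + 1), (-1 : ℤ) ^ j * ((n₁ + n₂).choose j : ℤ)) + n₂) *
          (X 0 ^ n₁ * X 1 ^ n₂)) :=
  sn_L_general n₁ n₂
end
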